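/- Over any field F, the following strict inclusions hold: VP_1^weakest(F) ⊊ VP_1^weak(F) ⊊ VP_1^gen(F) ⊊ VP_2^weakest(F). -/

import Mathlib

open MvPolynomial

noncomputable section

/-- A function `ℕ → ℕ` is polynomially bounded. -/
def PolyBounded (f : ℕ → ℕ) : Prop := ∃ c : ℕ, ∀ n, f n ≤ (n + 2) ^ c

/-- A sequence of multivariate polynomials is a family: `f n` uses only variables `x_i`
with `i < v n`, for a polynomially bounded `v`. -/
def IsPolyFamily {F : Type} [CommSemiring F] (f : ℕ → MvPolynomial ℕ F) : Prop :=
  ∃ v : ℕ → ℕ, PolyBounded v ∧ ∀ n, ∀ i ∈ (f n).vars, i < v n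

/-- Arithmetic formulas over `F` in variables `x_i`, `i : ℕ`: expressions built from
variables and constants by binary additions and multiplications. -/
inductive Formula (F : Type) where
  | var : ℕ → Formula F
  | const : F → Formula F
  | add : Formula F → Formula F → Formula F
  | mul : Formula F → Formula F → Formula F

namespace Formula

variable {F : Type} [CommSemiring F]

/-- The polynomial computed by an arithmetic formula. -/
def eval : Formula F → MvPolynomial ℕ F
  | var i => X i
  | const c => C c
  | add φ ψ => φ.eval + ψ.eval
  | mul φ ψ => φ.eval * ψ.eval

/-- The size of a formula: the number of (binary) operations. -/
def size : Formula F → ℕ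
  | var _ => 0
  | const _ => 0
  | add φ ψ => φ.size + ψ.size + 1
  | mul φ ψ => φ.size + ψ.size + 1

/-- The depth of a formula: the length of the longest root-to-leaf path. -/
def depth : Formula F → ℕ
  | var _ => 0
  | const _ => 0
  | add φ ψ => max φ.depth ψ.depth + 1
  | mul φ ψ => max φ.depth ψ.depth + 1

end Formula

/-- A general affine linear form `∑ αᵢ xᵢ + β`, i.e. a polynomial of total degree ≤ 1. -/
def IsGenForm {F : Type} [CommSemiring F] (p : MvPolynomial ℕ F) : Prop := p.totalDegree ≤ 1

/-- A single variable or a constant. -/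
def IsWeakestForm {F : Type} [CommSemiring F] (p : MvPolynomial ℕ F) : Prop :=
  (∃ i, p = X i) ∨ ∃ c, p = C c

/-- A simple affine linear form `α·xᵢ + β`. -/
def IsWeakForm {F : Type} [CommSemiring F] (p : MvPolynomial ℕ F) : Prop :=
  ∃ (α β : F) (i : ℕ), p = C α * X i + C β

/-- An affine linear form in at most two variables, `α·xᵢ + β·xⱼ + γ`. -/
def IsWeakPlusForm {F : Type} [CommSemiring F] (p : MvPolynomial ℕ F) : Prop :=
  ∃ (α β γ : F) (i j : ℕ), p = C α * X i + C β * X j + C γ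

/-- `ABPComputes form k s p`: some width-`k` algebraic branching program of size `s`, all of
whose matrix entries satisfy the predicate `form`, computes the polynomial `p`; that is,
`p = vᵀ · M_s ⋯ M_1 · w` for vectors `v, w ∈ F^k` and matrices `M_i` with entries of
type `form`. -/
def ABPComputes {F : Type} [CommSemiring F] (form : MvPolynomial ℕ F → Prop)
    (k s : ℕ) (p : MvPolynomial ℕ F) : Prop :=
  ∃ (v w : Fin k → F) (M : Fin s → Matrix (Fin k) (Fin k) (MvPolynomial ℕ F)),
    (∀ (i : Fin s) (a b : Fin k), form (M i a b)) ∧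
    p = dotProduct (fun a => C (v a))
          (Matrix.mulVec (List.ofFn M).prod fun a => C (w a))

/-- The class `VP_k^*`: families computable by width-`k` ABPs, with entries of label
type `form`, of polynomially bounded size. -/
def VPkClass (F : Type) [CommSemiring F] (k : ℕ)
    (form : MvPolynomial ℕ F → Prop) : Set (ℕ → MvPolynomial ℕ F) :=
  { f | IsPolyFamily f ∧
        ∃ s : ℕ → ℕ, PolyBounded s ∧ ∀ n, ∃ s' ≤ s n, ABPComputes form k s' (f n) }

/-- The class `VPe`: families computable by arithmetic formulas of polynomially
bounded size. -/
def VPe (F : Type) [CommSemiring F] : Set (ℕ → MvPolynomial ℕ F) :=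
  { f | IsPolyFamily f ∧
        ∃ s : ℕ → ℕ, PolyBounded s ∧ ∀ n, ∃ φ : Formula F, φ.size ≤ s n ∧ φ.eval = f n }

/-- The inclusion `F[x] → F(ε)[x]`. -/
def liftε (F : Type) [Field F] : MvPolynomial ℕ F →+* MvPolynomial ℕ (RatFunc F) :=
  MvPolynomial.map (algebraMap F (RatFunc F))

/-- The inclusion `F[ε][x] → F(ε)[x]`. -/
def liftPolyε (F : Type) [Field F] :
    MvPolynomial ℕ (Polynomial F) →+* MvPolynomial ℕ (RatFunc F) :=
  MvPolynomial.map (algebraMap (Polynomial F) (RatFunc F))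

/-- The approximation closure of a class `Cl` given over `F(ε)`: families `(f_n)` over `F`
for which there are error polynomials `f_{n;1}, …, f_{n;e(n)}` over `F` such that the family
`g_n = f_n + ε f_{n;1} + ⋯ + ε^{e(n)} f_{n;e(n)}` belongs to `Cl` over `F(ε)`. -/
def ApproxClosure (F : Type) [Field F]
    (Cl : Set (ℕ → MvPolynomial ℕ (RatFunc F))) : Set (ℕ → MvPolynomial ℕ F) :=
  { f | IsPolyFamily f ∧ ∃ (e : ℕ → ℕ) (ferr : ℕ → ℕ → MvPolynomial ℕ F),
      (fun n => liftε F (f n) + ∑ i ∈ Finset.range (e n),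
          C ((RatFunc.X : RatFunc F) ^ (i + 1)) * liftε F (ferr n i)) ∈ Cl }

/-- The poly-approximation closure: as `ApproxClosure`, with the error degree `e(n)`
additionally required to be polynomially bounded. -/
def PolyApproxClosure (F : Type) [Field F]
    (Cl : Set (ℕ → MvPolynomial ℕ (RatFunc F))) : Set (ℕ → MvPolynomial ℕ F) :=
  { f | IsPolyFamily f ∧ ∃ e : ℕ → ℕ, PolyBounded e ∧
      ∃ ferr : ℕ → ℕ → MvPolynomial ℕ F,
      (fun n => liftε F (f n) + ∑ i ∈ Finset.range (e n),
          C ((RatFunc.X : RatFunc F) ^ (i + 1)) * liftε F (ferr n i)) ∈ Cl }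

/-- The hypercube sum `∑_{b ∈ {0,1}^p} g(b, x)`: the first `p` variables of `g` are summed
over all Boolean assignments, and variable `p + i` of `g` is renamed to `x_i`. -/
def hcSum {F : Type} [CommSemiring F] (p : ℕ) (g : MvPolynomial ℕ F) : MvPolynomial ℕ F :=
  ∑ b : Fin p → Bool,
    MvPolynomial.aeval
      (fun i : ℕ => if h : i < p then (if b ⟨i, h⟩ then 1 else 0) else X (i - p)) g

/-- The nondeterminism closure `N(Cl)`: families `(f_n)` with
`f_n(x) = ∑_{b ∈ {0,1}^{p(n)}} g_{q(n)}(b,x)` for some `(g_n) ∈ Cl` and polynomially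
bounded `p`, `q`. -/
def Nclosure {F : Type} [CommSemiring F] (Cl : Set (ℕ → MvPolynomial ℕ F)) :
    Set (ℕ → MvPolynomial ℕ F) :=
  { f | IsPolyFamily f ∧ ∃ g ∈ Cl, ∃ p q : ℕ → ℕ, PolyBounded p ∧ PolyBounded q ∧
        ∀ n, f n = hcSum (p n) (g (q n)) }

/-- The matrix `Q(f) = [[f, 1], [1, 0]]`. -/
def Qmat {R : Type} [CommSemiring R] (f : MvPolynomial ℕ R) :
    Matrix (Fin 2) (Fin 2) (MvPolynomial ℕ R) := !![f, 1; 1, 0]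

/-- A primitive Q-matrix: `Q(ℓ)` for a parametrized affine linear form `ℓ`, i.e. an affine
linear form in the `x`-variables with coefficients in `F(ε)`. -/
def IsPrimitiveQ (F : Type) [Field F]
    (M : Matrix (Fin 2) (Fin 2) (MvPolynomial ℕ (RatFunc F))) : Prop :=
  ∃ ℓ : MvPolynomial ℕ (RatFunc F), ℓ.totalDegree ≤ 1 ∧ M = Qmat ℓ

/-- `M` can be written as a product of `n` primitive Q-matrices. -/
def IsProdPrimQ (F : Type) [Field F] (n : ℕ)
    (M : Matrix (Fin 2) (Fin 2) (MvPolynomial ℕ (RatFunc F))) : Prop :=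
  ∃ L : Fin n → Matrix (Fin 2) (Fin 2) (MvPolynomial ℕ (RatFunc F)),
    (∀ i, IsPrimitiveQ F (L i)) ∧ M = (List.ofFn L).prod

/-- `M ∈ Q(f) + O(ε^k)`: `M = Q(f) + ε^k · E` for some matrix `E` with entries
in `F[ε][x]`. -/
def InQErr (F : Type) [Field F] (f : MvPolynomial ℕ F) (k : ℕ)
    (M : Matrix (Fin 2) (Fin 2) (MvPolynomial ℕ (RatFunc F))) : Prop :=
  ∃ E : Matrix (Fin 2) (Fin 2) (MvPolynomial ℕ (Polynomial F)),
    M = Qmat (liftε F f) +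
      (C ((RatFunc.X : RatFunc F) ^ k) : MvPolynomial ℕ (RatFunc F)) • E.map (liftPolyε F)

/-- `M` has entries in `F[ε][x]` and error degree at most `e`: every entry has degree at
most `e` in `ε`. -/
def ErrDegLE (F : Type) [Field F]
    (M : Matrix (Fin 2) (Fin 2) (MvPolynomial ℕ (RatFunc F))) (e : ℕ) : Prop :=
  ∃ E : Matrix (Fin 2) (Fin 2) (MvPolynomial ℕ (Polynomial F)),
    M = E.map (liftPolyε F) ∧
    ∀ (a b : Fin 2) (m : ℕ →₀ ℕ), (MvPolynomial.coeff m (E a b)).natDegree ≤ e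

/-- The generalized Fibonacci polynomials: `F_0 = 1`, `F_1 = x_1`,
`F_n = x_n · F_{n-1} + F_{n-2}` (variables indexed from 0). -/
def fibPoly (R : Type) [CommSemiring R] : ℕ → MvPolynomial ℕ R
  | 0 => 1
  | 1 => X 0
  | n + 2 => X (n + 1) * fibPoly R (n + 1) + fibPoly R n

/-- `f` is a degeneration of the Fibonacci polynomial `F_m` witnessing border Fibonacci
complexity at most `m`: there are parametrized affine linear forms `ℓ_1, …, ℓ_m` with
`F_m(ℓ_1, …, ℓ_m) = f + ε·g` for some `g ∈ F[ε][x]`. -/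
def FibBorderProj (F : Type) [Field F] (f : MvPolynomial ℕ F) (m : ℕ) : Prop :=
  ∃ ℓ : ℕ → MvPolynomial ℕ (RatFunc F),
    (∀ i, (ℓ i).totalDegree ≤ 1) ∧
    ∃ g : MvPolynomial ℕ (Polynomial F),
      MvPolynomial.aeval ℓ (fibPoly (RatFunc F) m) =
        liftε F f + C (RatFunc.X : RatFunc F) * liftPolyε F g


/-!
The three width-one classes are nested because every weakest label is weak and every weak label
is a general affine form. A width-one ABP computes `c · ℓ₁ ⋯ ℓₛ`; after the variables beyond the
family's variable bound `N` are set to zero, each `ℓ = c + ∑_{i<N} aᵢ xᵢ` is the top-left entry of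
a product of `3N + 2` weakest `2 × 2` matrices, so `VP₁^gen ⊆ VP₂^weakest`.

The separations are witnessed by constant families. A product of variables and constants that is
a unit at `0` is constant, which excludes `x₀ + 1`. If a product of forms `α xⱼ + β` vanishes at
`0`, one factor is `α xⱼ`, which cannot divide `x₀ + x₁`. Finally, killing all variables but one
turns `x₀ x₁ + 1` into `1`, so every affine factor is free of `x₀` and `x₁`, and the product
would be constant; yet `x₀ x₁ + 1` is computed by two weakest `2 × 2` matrices.
-/

lemma Finsupp.eq_zero_or_exists_eq_single_of_sum_le_one {σ : Type*} {m : σ →₀ ℕ}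
    (h : (m.sum fun _ e => e) ≤ 1) : m = 0 ∨ ∃ i, m = Finsupp.single i 1 := by
  classical
  rw [← Finsupp.toMultiset_toFinsupp m]
  have hcard : Multiset.card (Finsupp.toMultiset m) ≤ 1 := (Finsupp.card_toMultiset m).trans_le h
  rcases Nat.le_one_iff_eq_zero_or_eq_one.1 hcard with h0 | h1
  · simp [Multiset.card_eq_zero.1 h0]
  · obtain ⟨i, hi⟩ := Multiset.card_eq_one.1 h1
    exact Or.inr ⟨i, by simp [hi, Multiset.toFinsupp_singleton]⟩

namespace MvPolynomial

section CommSemiring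

variable {σ R : Type*} [CommSemiring R]

lemma eval_zero_eq_eval_one_of_eq_C {p : MvPolynomial σ R} {a : R} (h : p = C a) :
    eval 0 p = eval 1 p := by
  simp [h]

lemma eq_C_add_sum_of_totalDegree_le_one {p : MvPolynomial σ R} (hp : p.totalDegree ≤ 1) :
    p = C (coeff 0 p) + ∑ i ∈ p.vars, C (coeff (Finsupp.single i 1) p) * X i := by
  classical
  ext m
  simp only [coeff_add, coeff_C, coeff_sum, coeff_C_mul, coeff_X, mul_ite, mul_one, mul_zero]
  by_cases hm : m ∈ p.support
  · rcases Finsupp.eq_zero_or_exists_eq_single_of_sum_le_one ((le_totalDegree hm).trans hp) with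
        rfl | ⟨j, rfl⟩
    · simp
    · have hj : j ∈ p.vars := (mem_vars_iff_mem_support j).2 ⟨_, hm, by simp⟩
      simp [Finsupp.single_left_inj one_ne_zero, hj, (Finsupp.single_ne_zero.2 one_ne_zero).symm]
  · rw [notMem_support_iff] at hm
    rw [hm, Finset.sum_eq_zero fun i _ => by split_ifs with h <;> simp [h, hm]]
    split_ifs with h <;> simp [h, hm]

variable [DecidableEq σ]

def restrictVars (s : Finset σ) : MvPolynomial σ R →ₐ[R] MvPolynomial σ R :=
  aeval fun i => if i ∈ s then X i else 0

lemma restrictVars_X (s : Finset σ) (i : σ) :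
    restrictVars s (X i : MvPolynomial σ R) = if i ∈ s then X i else 0 :=
  aeval_X _ _

lemma restrictVars_of_vars_subset {s : Finset σ} {p : MvPolynomial σ R} (h : p.vars ⊆ s) :
    restrictVars s p = p := by
  refine hom_congr_vars (f₂ := RingHom.id _) (by ext; simp [restrictVars]) (fun i hi _ => ?_) rfl
  simp [restrictVars_X, h hi]

lemma restrictVars_of_totalDegree_le_one (s : Finset σ) {p : MvPolynomial σ R}
    (hp : p.totalDegree ≤ 1) :
    restrictVars s p = C (coeff 0 p) + ∑ i ∈ s, C (coeff (Finsupp.single i 1) p) * X i := by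
  conv_lhs => rw [eq_C_add_sum_of_totalDegree_le_one hp]
  simp only [map_add, map_sum, map_mul, restrictVars_X, algHom_C, algebraMap_eq, mul_ite,
    mul_zero, ← Finset.sum_filter]
  congr 1
  refine Finset.sum_subset (fun i => by simp) fun i hi hi' => ?_
  have hcoeff : coeff (Finsupp.single i 1) p = 0 := by
    by_contra h
    exact hi' (Finset.mem_filter.2 ⟨(mem_vars_iff_mem_support i).2
      ⟨_, mem_support_iff.2 h, by simp⟩, hi⟩)
  simp [hcoeff]

end CommSemiring

section Domain

variable {σ R : Type*} [CommRing R] [IsDomain R] [DecidableEq σ]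

lemma coeff_single_eq_zero_of_isUnit_restrictVars {p : MvPolynomial σ R} {j : σ}
    (hp : p.totalDegree ≤ 1) (hu : IsUnit (restrictVars {j} p)) :
    coeff (Finsupp.single j 1) p = 0 := by
  obtain ⟨r, -, hr⟩ := isUnit_iff_eq_C_of_isReduced.1 hu
  rw [restrictVars_of_totalDegree_le_one _ hp, Finset.sum_singleton] at hr
  simpa [(Finsupp.single_ne_zero.2 one_ne_zero).symm] using
    congrArg (coeff (Finsupp.single j 1)) hr

lemma exists_restrictVars_eq_C_of_isUnit {ι : Type*} [Fintype ι] {ℓ : ι → MvPolynomial σ R}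
    (hℓ : ∀ i, (ℓ i).totalDegree ≤ 1) {c : R} {s : Finset σ}
    (hu : ∀ j ∈ s, IsUnit (restrictVars {j} (C c * ∏ i, ℓ i))) :
    ∃ a, restrictVars s (C c * ∏ i, ℓ i) = C a := by
  have hcoeff : ∀ i, ∀ j ∈ s, coeff (Finsupp.single j 1) (ℓ i) = 0 := fun i j hj =>
    coeff_single_eq_zero_of_isUnit_restrictVars (hℓ i) <| isUnit_of_dvd_unit
      (map_dvd _ (dvd_mul_of_dvd_right (Finset.dvd_prod_of_mem _ (Finset.mem_univ i)) _))
      (hu j hj)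
  refine ⟨c * ∏ i, coeff 0 (ℓ i), ?_⟩
  simp only [map_mul, map_prod, restrictVars_of_totalDegree_le_one s (hℓ _), algHom_C]
  congr 1
  refine Finset.prod_congr rfl fun i _ => ?_
  rw [Finset.sum_eq_zero fun j hj => by rw [hcoeff i j hj, map_zero, zero_mul], add_zero]

end Domain

end MvPolynomial

section Forms

variable {F : Type} [CommSemiring F] {p : MvPolynomial ℕ F}

lemma isWeakestForm_C (c : F) : IsWeakestForm (C c : MvPolynomial ℕ F) := Or.inr ⟨c, rfl⟩

lemma isWeakestForm_X (i : ℕ) : IsWeakestForm (X i : MvPolynomial ℕ F) := Or.inl ⟨i, rfl⟩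

lemma isWeakestForm_zero : IsWeakestForm (0 : MvPolynomial ℕ F) := Or.inr ⟨0, C_0.symm⟩

lemma isWeakestForm_one : IsWeakestForm (1 : MvPolynomial ℕ F) := Or.inr ⟨1, C_1.symm⟩

lemma IsWeakestForm.isWeakForm (h : IsWeakestForm p) : IsWeakForm p := by
  rcases h with ⟨i, rfl⟩ | ⟨c, rfl⟩
  · exact ⟨1, 0, i, by simp⟩
  · exact ⟨0, c, 0, by simp⟩

lemma IsWeakForm.isGenForm (h : IsWeakForm p) : IsGenForm p := by
  obtain ⟨α, β, i, rfl⟩ := h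
  refine (totalDegree_add _ _).trans (max_le ?_ (by simp))
  rw [C_mul_X_eq_monomial]
  exact (totalDegree_monomial_le _ _).trans (by simp)

end Forms

lemma Matrix.list_prod_fin_one_apply {R : Type*} [CommSemiring R]
    (L : List (Matrix (Fin 1) (Fin 1) R)) : L.prod 0 0 = (L.map (· 0 0)).prod := by
  induction L with
  | nil => rfl
  | cons A L ih => simp [Matrix.mul_apply, ih]

section WidthOne

variable {F : Type} [CommSemiring F] {form : MvPolynomial ℕ F → Prop}

lemma abpComputes_one_iff {s : ℕ} {p : MvPolynomial ℕ F} :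
    ABPComputes form 1 s p ↔
      ∃ (c : F) (ℓ : Fin s → MvPolynomial ℕ F), (∀ i, form (ℓ i)) ∧ p = C c * ∏ i, ℓ i := by
  have hprod (M : Fin s → Matrix (Fin 1) (Fin 1) (MvPolynomial ℕ F)) :
      (List.ofFn M).prod 0 0 = ∏ i, M i 0 0 := by
    rw [Matrix.list_prod_fin_one_apply, List.map_ofFn, List.prod_ofFn]
    rfl
  constructor
  · rintro ⟨v, w, M, hM, rfl⟩
    refine ⟨v 0 * w 0, fun i => M i 0 0, fun i => hM i 0 0, ?_⟩
    simp only [dotProduct, Finset.univ_unique, Fin.default_eq_zero, Matrix.mulVec,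
      Finset.sum_singleton, hprod, map_mul]
    ring
  · rintro ⟨c, ℓ, hℓ, rfl⟩
    refine ⟨fun _ => c, fun _ => 1, fun i => Matrix.of fun _ _ => ℓ i, fun i _ _ => hℓ i, ?_⟩
    simp [dotProduct, Matrix.mulVec, hprod]

lemma abpComputes_one_one_of_form {form : MvPolynomial ℕ F → Prop} (h : form p) :
    ABPComputes form 1 1 p :=
  abpComputes_one_iff.2 ⟨1, fun _ => p, fun _ => h, by simp⟩

end WidthOne

section Separations

variable {F : Type} [Field F] {s : ℕ}

lemma not_abpComputes_weakest_X_add_one :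
    ¬ ABPComputes IsWeakestForm 1 s (X 0 + 1 : MvPolynomial ℕ F) := by
  rw [abpComputes_one_iff]
  rintro ⟨c, ℓ, hℓ, h⟩
  have hconst : ∀ i, ∃ d, ℓ i = C d := by
    intro i
    have hdvd : ℓ i ∣ X 0 + 1 :=
      h ▸ dvd_mul_of_dvd_right (Finset.dvd_prod_of_mem ℓ (Finset.mem_univ i)) _
    have hu : IsUnit (eval 0 (ℓ i)) := isUnit_of_dvd_unit (map_dvd _ hdvd) (by simp)
    rcases hℓ i with ⟨j, hj⟩ | hC
    · simp [hj] at hu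
    · exact hC
  choose d hd using hconst
  rw [funext hd, ← map_prod, ← map_mul] at h
  simpa using eval_zero_eq_eval_one_of_eq_C h

lemma not_abpComputes_weak_X_add_X :
    ¬ ABPComputes IsWeakForm 1 s (X 0 + X 1 : MvPolynomial ℕ F) := by
  rw [abpComputes_one_iff]
  rintro ⟨c, ℓ, hℓ, h⟩
  have hzero : eval 0 (C c * ∏ i, ℓ i) = 0 := by simp [← h]
  rw [map_mul, map_prod, mul_eq_zero, Finset.prod_eq_zero_iff] at hzero
  rcases hzero with hc | ⟨i, -, hi⟩
  · rw [show c = 0 by simpa using hc, map_zero, zero_mul] at h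
    simpa using congrArg (eval (Pi.single 0 1)) h
  obtain ⟨α, β, j, hj⟩ := hℓ i
  obtain rfl : β = 0 := by simpa [hj] using hi
  -- at `e_k` with `k ∈ {0, 1}`, `k ≠ j`, the form `ℓ i = α x_j` vanishes but `X 0 + X 1` does not
  set k := if j = 0 then 1 else 0
  have hdvd : eval (Pi.single k 1) (ℓ i) ∣ eval (Pi.single k 1) (X 0 + X 1) :=
    map_dvd _ (h ▸ dvd_mul_of_dvd_right (Finset.dvd_prod_of_mem ℓ (Finset.mem_univ i)) _)
  by_cases hj0 : j = 0 <;> simp [hj, hj0, k] at hdvd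

lemma not_abpComputes_gen_X_mul_X_add_one :
    ¬ ABPComputes IsGenForm 1 s (X 0 * X 1 + 1 : MvPolynomial ℕ F) := by
  rw [abpComputes_one_iff]
  rintro ⟨c, ℓ, hℓ, h⟩
  obtain ⟨a, ha⟩ := exists_restrictVars_eq_C_of_isUnit hℓ (s := {0, 1}) fun j hj => by
    rw [← h]
    rcases Finset.mem_insert.1 hj with rfl | hj
    · simp [restrictVars_X]
    · simp [Finset.mem_singleton.1 hj, restrictVars_X]
  rw [← h] at ha
  simpa [restrictVars_X] using eval_zero_eq_eval_one_of_eq_C ha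

end Separations

def IsProdOfMatricesWith {ι R : Type*} [Fintype ι] [DecidableEq ι] [Semiring R]
    (form : R → Prop) (s : ℕ) (M : Matrix ι ι R) : Prop :=
  ∃ L : List (Matrix ι ι R), (∀ A ∈ L, ∀ a b, form (A a b)) ∧ L.length ≤ s ∧ L.prod = M

namespace IsProdOfMatricesWith

variable {ι R : Type*} [Fintype ι] [DecidableEq ι] [Semiring R] {form : R → Prop}

lemma of_entries {A : Matrix ι ι R} (h : ∀ a b, form (A a b)) : IsProdOfMatricesWith form 1 A :=
  ⟨[A], by simpa using h, by simp, by simp⟩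

lemma of_fin_two {p q r t : R} (hp : form p) (hq : form q) (hr : form r) (ht : form t) :
    IsProdOfMatricesWith form 1 !![p, q; r, t] :=
  of_entries <| by simp [Fin.forall_fin_two, hp, hq, hr, ht]

lemma one : IsProdOfMatricesWith form 0 (1 : Matrix ι ι R) := ⟨[], by simp, by simp, by simp⟩

lemma mono {k l : ℕ} {A : Matrix ι ι R} (h : IsProdOfMatricesWith form k A) (hkl : k ≤ l) :
    IsProdOfMatricesWith form l A :=
  let ⟨L, hL, hlen, hprod⟩ := h
  ⟨L, hL, hlen.trans hkl, hprod⟩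

lemma mul {k l : ℕ} {A B : Matrix ι ι R} (hA : IsProdOfMatricesWith form k A)
    (hB : IsProdOfMatricesWith form l B) : IsProdOfMatricesWith form (k + l) (A * B) := by
  obtain ⟨L, hL, hlen, rfl⟩ := hA
  obtain ⟨L', hL', hlen', rfl⟩ := hB
  refine ⟨L ++ L', fun A hA => ?_, by simp only [List.length_append]; omega,
    List.prod_append⟩
  rcases List.mem_append.1 hA with hA | hA
  exacts [hL A hA, hL' A hA]

lemma list_prod {k : ℕ} {As : List (Matrix ι ι R)}
    (h : ∀ A ∈ As, IsProdOfMatricesWith form k A) :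
    IsProdOfMatricesWith form (k * As.length) As.prod := by
  induction As with
  | nil => exact one
  | cons A As ih =>
    simpa [Nat.mul_succ, add_comm] using
      (h A List.mem_cons_self).mul (ih fun B hB => h B (List.mem_cons_of_mem _ hB))

end IsProdOfMatricesWith

lemma IsProdOfMatricesWith.abpComputes {F : Type} [CommSemiring F]
    {form : MvPolynomial ℕ F → Prop} {k s : ℕ} {M : Matrix (Fin k) (Fin k) (MvPolynomial ℕ F)}
    (h : IsProdOfMatricesWith form s M) (v w : Fin k → F) :
    ∃ s' ≤ s, ABPComputes form k s'
      (dotProduct (fun a => C (v a)) (Matrix.mulVec M fun a => C (w a))) := by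
  obtain ⟨L, hL, hlen, rfl⟩ := h
  exact ⟨L.length, hlen, v, w, L.get, fun i => hL _ (L.get_mem i), by rw [List.ofFn_get]⟩

section WeakestSimulation

variable {F : Type} [Field F]

lemma isProdOfMatricesWith_weakest_C_mul_X (a : F) (i : ℕ) :
    IsProdOfMatricesWith IsWeakestForm 3 !![1, 0; C a * X i, (1 : MvPolynomial ℕ F)] := by
  rcases eq_or_ne a 0 with rfl | ha
  · simpa [← Matrix.one_fin_two] using IsProdOfMatricesWith.one.mono (Nat.zero_le 3)
  -- conjugating `!![1, 0; X i, 1]` by `diag(1, a)` scales its lower-left entry by `a`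
  have h := ((IsProdOfMatricesWith.of_fin_two isWeakestForm_one isWeakestForm_zero
    isWeakestForm_zero (isWeakestForm_C a)).mul (IsProdOfMatricesWith.of_fin_two
    isWeakestForm_one isWeakestForm_zero (isWeakestForm_X i) isWeakestForm_one)).mul
    (IsProdOfMatricesWith.of_fin_two isWeakestForm_one isWeakestForm_zero
    isWeakestForm_zero (isWeakestForm_C a⁻¹))
  convert h using 1
  simp [← map_mul, ha]

lemma isProdOfMatricesWith_weakest_sum (t : Finset ℕ) (a : ℕ → F) :
    IsProdOfMatricesWith IsWeakestForm (3 * t.card)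
      !![1, 0; ∑ i ∈ t, C (a i) * X i, (1 : MvPolynomial ℕ F)] := by
  classical
  induction t using Finset.induction_on with
  | empty => simpa [← Matrix.one_fin_two] using IsProdOfMatricesWith.one
  | insert i t hi ih =>
    rw [Finset.card_insert_of_notMem hi, Finset.sum_insert hi, Nat.mul_succ, add_comm]
    convert (isProdOfMatricesWith_weakest_C_mul_X (a i) i).mul ih using 1
    simp

lemma isProdOfMatricesWith_weakest_affine (c : F) (t : Finset ℕ) (a : ℕ → F) :
    IsProdOfMatricesWith IsWeakestForm (3 * t.card + 2)
      !![C c + ∑ i ∈ t, C (a i) * X i, 0; 0, (0 : MvPolynomial ℕ F)] := by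
  have h := ((IsProdOfMatricesWith.of_fin_two (isWeakestForm_C c) isWeakestForm_one
    isWeakestForm_zero isWeakestForm_zero).mul (isProdOfMatricesWith_weakest_sum t a)).mul
    (IsProdOfMatricesWith.of_fin_two isWeakestForm_one isWeakestForm_zero
    isWeakestForm_zero isWeakestForm_zero)
  convert h using 1
  · ring
  · simp

end WeakestSimulation

lemma Matrix.list_prod_map_corner_apply {R : Type*} [CommSemiring R] (L : List R) :
    (L.map fun q => !![q, 0; 0, 0]).prod 0 0 = L.prod := by
  induction L with
  | nil => rfl
  | cons q L ih => simp [Matrix.mul_apply, Fin.sum_univ_two, ih]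

lemma polyBounded_const (m : ℕ) : PolyBounded fun _ => m :=
  ⟨m, fun n => (Nat.lt_pow_self (by omega)).le⟩

lemma PolyBounded.mul {f g : ℕ → ℕ} (hf : PolyBounded f) (hg : PolyBounded g) :
    PolyBounded fun n => f n * g n := by
  obtain ⟨a, ha⟩ := hf
  obtain ⟨b, hb⟩ := hg
  exact ⟨a + b, fun n => pow_add (n + 2) a b ▸ Nat.mul_le_mul (ha n) (hb n)⟩

lemma PolyBounded.add {f g : ℕ → ℕ} (hf : PolyBounded f) (hg : PolyBounded g) :
    PolyBounded fun n => f n + g n := by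
  obtain ⟨a, ha⟩ := hf
  obtain ⟨b, hb⟩ := hg
  refine ⟨a + b + 1, fun n => ?_⟩
  have hpa : (n + 2) ^ a ≤ (n + 2) ^ (a + b) := Nat.pow_le_pow_right (by omega) (by omega)
  have hpb : (n + 2) ^ b ≤ (n + 2) ^ (a + b) := Nat.pow_le_pow_right (by omega) (by omega)
  calc f n + g n ≤ 2 * (n + 2) ^ (a + b) := by linarith [ha n, hb n]
    _ ≤ (n + 2) * (n + 2) ^ (a + b) := Nat.mul_le_mul_right _ (by omega)
    _ = (n + 2) ^ (a + b + 1) := (pow_succ' _ _).symm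

lemma isPolyFamily_const {F : Type} [CommSemiring F] (q : MvPolynomial ℕ F) :
    IsPolyFamily fun _ => q :=
  ⟨fun _ => q.vars.sup id + 1, polyBounded_const _, fun _ _ hi =>
    Nat.lt_succ_of_le (Finset.le_sup (f := id) hi)⟩

section VPkClass

variable {F : Type} [CommSemiring F] {k : ℕ} {form form' : MvPolynomial ℕ F → Prop}

lemma VPkClass_mono (h : ∀ p, form p → form' p) : VPkClass F k form ⊆ VPkClass F k form' := by
  rintro f ⟨hf, s, hs, hc⟩
  refine ⟨hf, s, hs, fun n => ?_⟩
  obtain ⟨s', hs', v, w, M, hM, hp⟩ := hc n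
  exact ⟨s', hs', v, w, M, fun i a b => h _ (hM i a b), hp⟩

lemma const_mem_VPkClass {q : MvPolynomial ℕ F} (h : ∃ s, ABPComputes form k s q) :
    (fun _ => q) ∈ VPkClass F k form :=
  let ⟨s, hs⟩ := h
  ⟨isPolyFamily_const q, fun _ => s, polyBounded_const s, fun _ => ⟨s, le_rfl, hs⟩⟩

lemma const_notMem_VPkClass {q : MvPolynomial ℕ F} (h : ∀ s, ¬ ABPComputes form k s q) :
    (fun _ => q) ∉ VPkClass F k form := by
  rintro ⟨-, s, -, hc⟩
  obtain ⟨s', -, habp⟩ := hc 0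
  exact h s' habp

end VPkClass

lemma VPkClass_gen_one_subset_weakest_two {F : Type} [Field F] :
    VPkClass F 1 IsGenForm ⊆ VPkClass F 2 IsWeakestForm := by
  rintro f ⟨⟨v, hv, hvars⟩, s, hs, hc⟩
  refine ⟨⟨v, hv, hvars⟩, fun n => (3 * v n + 2) * s n,
    ((polyBounded_const 3).mul hv |>.add (polyBounded_const 2)).mul hs, fun n => ?_⟩
  obtain ⟨s', hs', habp⟩ := hc n
  obtain ⟨c, ℓ, hℓ, hfn⟩ := abpComputes_one_iff.1 habp
  -- variables `x_i` with `i ≥ v n` do not occur in `f n`, so they may be set to zero in each form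
  set t := Finset.range (v n)
  have hfn' : f n = C c * ∏ i, restrictVars t (ℓ i) := by
    rw [← restrictVars_of_vars_subset (s := t) fun i hi => Finset.mem_range.2 (hvars n i hi),
      hfn, map_mul, map_prod, algHom_C, algebraMap_eq]
  have hgadget : ∀ A ∈ List.ofFn (fun i => !![restrictVars t (ℓ i), 0; 0, 0]),
      IsProdOfMatricesWith IsWeakestForm (3 * v n + 2) A := by
    intro A hA
    obtain ⟨i, rfl⟩ := List.mem_ofFn.1 hA
    simpa [restrictVars_of_totalDegree_le_one t (hℓ i), t] using
      isProdOfMatricesWith_weakest_affine (coeff 0 (ℓ i)) t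
        (fun j => coeff (Finsupp.single j 1) (ℓ i))
  obtain ⟨s'', hs'', habp'⟩ :=
    (IsProdOfMatricesWith.list_prod hgadget).abpComputes (Pi.single 0 c) (Pi.single 0 1)
  refine ⟨s'', hs''.trans ?_, ?_⟩
  · rw [List.length_ofFn]
    exact Nat.mul_le_mul_left _ hs'
  · convert habp' using 1
    rw [hfn', ← List.prod_ofFn, ← Matrix.list_prod_map_corner_apply, List.map_ofFn]
    simp [dotProduct, Matrix.mulVec, Fin.sum_univ_two, Function.comp_def]

lemma exists_abpComputes_weakest_two_X_mul_X_add_one {F : Type} [CommSemiring F] :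
    ∃ s, ABPComputes IsWeakestForm 2 s (X 0 * X 1 + 1 : MvPolynomial ℕ F) := by
  have h := (IsProdOfMatricesWith.of_fin_two (isWeakestForm_X (F := F) 0) isWeakestForm_one
    isWeakestForm_zero isWeakestForm_zero).mul (IsProdOfMatricesWith.of_fin_two
    (isWeakestForm_X 1) isWeakestForm_zero isWeakestForm_one isWeakestForm_zero)
  obtain ⟨s, -, habp⟩ := h.abpComputes (Pi.single 0 1) (Pi.single 0 1)
  refine ⟨s, ?_⟩
  convert habp using 1
  simp [dotProduct, Matrix.mulVec, Fin.sum_univ_two]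

/-- `VP_1^weakest ⊊ VP_1^weak ⊊ VP_1^gen ⊊ VP_2^weakest` over any field. -/
theorem statement16 (F : Type) [Field F] :
    VPkClass F 1 IsWeakestForm ⊂ VPkClass F 1 IsWeakForm ∧
    VPkClass F 1 IsWeakForm ⊂ VPkClass F 1 IsGenForm ∧
    VPkClass F 1 IsGenForm ⊂ VPkClass F 2 IsWeakestForm := by
  have hgen : IsGenForm (X 0 + X 1 : MvPolynomial ℕ F) :=
    (totalDegree_add _ _).trans (by simp [totalDegree_X])
  refine ⟨(Set.ssubset_iff_of_subset (VPkClass_mono fun _ => IsWeakestForm.isWeakForm)).2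
      ⟨_, const_mem_VPkClass ⟨1, abpComputes_one_one_of_form ⟨1, 1, 0, by simp⟩⟩,
        const_notMem_VPkClass fun _ => not_abpComputes_weakest_X_add_one⟩,
    (Set.ssubset_iff_of_subset (VPkClass_mono fun _ => IsWeakForm.isGenForm)).2
      ⟨_, const_mem_VPkClass ⟨1, abpComputes_one_one_of_form hgen⟩,
        const_notMem_VPkClass fun _ => not_abpComputes_weak_X_add_X⟩,
    (Set.ssubset_iff_of_subset VPkClass_gen_one_subset_weakest_two).2
      ⟨_, const_mem_VPkClass exists_abpComputes_weakest_two_X_mul_X_add_one,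
        const_notMem_VPkClass fun _ => not_abpComputes_gen_X_mul_X_add_one⟩⟩
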